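/- Any square-integrable function g on [0,1]^n with ∫ g dξ = 1 satisfies ∫ g² dξ ≥ (Σ_{i=1}^n ∫ g_i(ξ_i)² dξ_i) − (n−1). -/

import Mathlib

open MeasureTheory

/-- Lebesgue measure restricted to the unit interval. -/
noncomputable def lineMeasure : Measure ℝ := volume.restrict (Set.Icc (0:ℝ) 1)

/-- The (product) Lebesgue measure on the unit hypercube `[0,1]^n`. -/
noncomputable def cubeMeasure (n : ℕ) : Measure (Fin n → ℝ) :=
  Measure.pi fun _ => lineMeasure

/-- The `i`-th marginal of `g`: the integral of `g` over all coordinates except the `i`-th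
(since `cubeMeasure n` is a product of probability measures, integrating the updated function
over the full cube agrees with integrating over `ξ_i^c`). -/
noncomputable def marginal {n : ℕ} (g : (Fin n → ℝ) → ℝ) (i : Fin n) (x : ℝ) : ℝ :=
  ∫ ξ, g (Function.update ξ i x) ∂(cubeMeasure n)

instance : IsProbabilityMeasure lineMeasure := by
  constructor
  rw [lineMeasure, Measure.restrict_apply MeasurableSet.univ, Set.univ_inter, Real.volume_Icc]
  norm_num

instance (n : ℕ) : IsProbabilityMeasure (cubeMeasure n) := by
  rw [cubeMeasure]; infer_instance

section aux

variable {n : ℕ} (i : Fin n)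

/-- the update map -/
def upd (i : Fin n) : ℝ × (Fin n → ℝ) → (Fin n → ℝ) := fun p => Function.update p.2 i p.1

lemma measurable_upd : Measurable (upd i) := by
  apply measurable_pi_lambda
  intro j
  by_cases hj : j = i
  · subst hj; simpa [upd] using measurable_fst
  · simp only [upd, Function.update_of_ne hj]
    exact (measurable_pi_apply j).comp measurable_snd

lemma measurePreserving_upd :
    MeasurePreserving (upd i) (lineMeasure.prod (cubeMeasure n)) (cubeMeasure n) := by
  refine ⟨measurable_upd i, ?_⟩
  refine (Measure.pi_eq fun s hs => ?_).symm
  rw [Measure.map_apply (measurable_upd i) (MeasurableSet.univ_pi hs)]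
  have hpre : upd i ⁻¹' (Set.pi Set.univ s)
      = (s i) ×ˢ (Set.pi Set.univ (Function.update s i Set.univ)) := by
    ext ⟨x, η⟩
    simp only [Set.mem_preimage, Set.mem_pi, Set.mem_univ, forall_true_left, Set.mem_prod, upd]
    constructor
    · intro h
      refine ⟨by simpa using h i, fun j => ?_⟩
      by_cases hj : j = i
      · subst hj; simp
      · have := h j; simpa [Function.update_of_ne hj] using this
    · rintro ⟨hx, h⟩ j
      by_cases hj : j = i
      · subst hj; simpa using hx
      · have := h j; simpa [Function.update_of_ne hj] using this
  rw [hpre, Measure.prod_prod, cubeMeasure, Measure.pi_pi]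
  rw [Finset.prod_eq_mul_prod_sdiff_singleton_of_mem (Finset.mem_univ i)
    (fun j => lineMeasure (Function.update s i Set.univ j))]
  rw [Finset.prod_eq_mul_prod_sdiff_singleton_of_mem (Finset.mem_univ i) (fun j => lineMeasure (s j))]
  have h1 : lineMeasure (Function.update s i Set.univ i) = 1 := by simp
  rw [h1, one_mul]
  congr 1
  apply Finset.prod_congr rfl
  intro j hj
  rw [Function.update_of_ne (by simpa using (Finset.mem_sdiff.mp hj).2)]

lemma integrable_comp_upd {f : (Fin n → ℝ) → ℝ} (hf : Integrable f (cubeMeasure n)) :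
    Integrable (fun p : ℝ × (Fin n → ℝ) => f (upd i p)) (lineMeasure.prod (cubeMeasure n)) :=
  ((measurePreserving_upd i).integrable_comp hf.aestronglyMeasurable).mpr hf

lemma fubini_upd {f : (Fin n → ℝ) → ℝ} (hf : Integrable f (cubeMeasure n)) :
    ∫ ξ, f ξ ∂(cubeMeasure n)
      = ∫ x, ∫ η, f (Function.update η i x) ∂(cubeMeasure n) ∂lineMeasure := by
  calc ∫ ξ, f ξ ∂(cubeMeasure n)
      = ∫ ξ, f ξ ∂(Measure.map (upd i) (lineMeasure.prod (cubeMeasure n))) := by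
        rw [(measurePreserving_upd i).map_eq]
    _ = ∫ p, f (upd i p) ∂(lineMeasure.prod (cubeMeasure n)) := by
        apply integral_map (measurable_upd i).aemeasurable
        rw [(measurePreserving_upd i).map_eq]
        exact hf.aestronglyMeasurable
    _ = ∫ x, ∫ η, f (Function.update η i x) ∂(cubeMeasure n) ∂lineMeasure :=
        integral_prod _ (integrable_comp_upd i hf)

lemma measurePreserving_eval :
    MeasurePreserving (fun ξ : Fin n → ℝ => ξ i) (cubeMeasure n) lineMeasure := by
  refine ⟨measurable_pi_apply i, ?_⟩
  have : (fun ξ : Fin n → ℝ => ξ i) ∘ (upd i) = Prod.fst := by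
    funext p; simp [upd]
  rw [← (measurePreserving_upd i).map_eq,
    Measure.map_map (measurable_pi_apply i) (measurable_upd i), this, Measure.map_fst_prod]
  simp

end aux

lemma L2mul {α : Type*} [MeasurableSpace α] {μ : Measure α} {f h : α → ℝ}
    (hf : MemLp f 2 μ) (hh : MemLp h 2 μ) : Integrable (fun x => f x * h x) μ := by
  have hpqr : (1 : ENNReal)/1 = 1/2 + 1/2 := by
    rw [ENNReal.add_halves]; simp
  have h2 := hh.smul hf (hpqr := ⟨by rw [ENNReal.inv_two_add_inv_two, inv_one]⟩)
  rw [memLp_one_iff_integrable] at h2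
  have : (f • h) = fun x => f x * h x := by funext x; simp [Pi.smul_apply, smul_eq_mul]
  rwa [this] at h2

lemma sq_integral_le {α : Type*} [MeasurableSpace α] {μ : Measure α} [IsProbabilityMeasure μ]
    {f : α → ℝ} (h1 : Integrable f μ) (h2 : Integrable (fun x => f x ^ 2) μ) :
    (∫ x, f x ∂μ) ^ 2 ≤ ∫ x, f x ^ 2 ∂μ := by
  set c := ∫ x, f x ∂μ with hc
  have h0 : 0 ≤ ∫ x, (f x - c) ^ 2 ∂μ := integral_nonneg fun x => sq_nonneg _
  have hexp : ∫ x, (f x - c) ^ 2 ∂μ = ∫ x, (f x ^ 2 - 2 * c * f x + c ^ 2) ∂μ := by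
    congr 1; funext x; ring
  have i1 : Integrable (fun x => f x ^ 2 - 2 * c * f x) μ := h2.sub (h1.const_mul (2*c))
  rw [hexp, integral_add i1 (integrable_const _),
    integral_sub h2 (h1.const_mul (2*c)), integral_const_mul, integral_const] at h0
  simp only [measure_univ, probReal_univ, ENNReal.toReal_one, smul_eq_mul, one_mul] at h0
  nlinarith [h0]

section main

variable {n : ℕ} {g : (Fin n → ℝ) → ℝ}

lemma marg_aesm (hg : MemLp g 2 (cubeMeasure n)) (i : Fin n) :
    AEStronglyMeasurable (marginal g i) lineMeasure := by
  have hG : AEStronglyMeasurable (fun p : ℝ × (Fin n → ℝ) => g (upd i p))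
      (lineMeasure.prod (cubeMeasure n)) :=
    hg.aestronglyMeasurable.comp_measurePreserving (measurePreserving_upd i)
  exact hG.integral_prod_right'

lemma marg_memL2 (hg : MemLp g 2 (cubeMeasure n)) (i : Fin n) :
    MemLp (marginal g i) 2 lineMeasure := by
  rw [memLp_two_iff_integrable_sq (marg_aesm hg i)]
  have hGL2 : MemLp (fun p : ℝ × (Fin n → ℝ) => g (upd i p)) 2
      (lineMeasure.prod (cubeMeasure n)) :=
    hg.comp_measurePreserving (measurePreserving_upd i)
  have hG2 : Integrable (fun p : ℝ × (Fin n → ℝ) => g (upd i p) ^ 2)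
      (lineMeasure.prod (cubeMeasure n)) := hGL2.integrable_sq
  have hG1 : Integrable (fun p : ℝ × (Fin n → ℝ) => g (upd i p))
      (lineMeasure.prod (cubeMeasure n)) := hGL2.integrable one_le_two
  have hB : Integrable (fun x => ∫ η, g (upd i (x, η)) ^ 2 ∂(cubeMeasure n)) lineMeasure :=
    hG2.integral_prod_left
  have hms : AEStronglyMeasurable (fun x => marginal g i x ^ 2) lineMeasure := by
    have h := (marg_aesm hg i).mul (marg_aesm hg i)
    have heq : (marginal g i * marginal g i) = fun x => marginal g i x ^ 2 := by
      funext x; simp [Pi.mul_apply]; ring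
    rwa [heq] at h
  refine hB.mono' hms ?_
  filter_upwards [hG1.prod_right_ae, hG2.prod_right_ae] with x h1 h2
  rw [Real.norm_eq_abs, abs_of_nonneg (sq_nonneg _)]
  exact sq_integral_le h1 h2

lemma h_memL2 (hg : MemLp g 2 (cubeMeasure n)) (i : Fin n) :
    MemLp (fun ξ : Fin n → ℝ => marginal g i (ξ i)) 2 (cubeMeasure n) :=
  (marg_memL2 hg i).comp_measurePreserving (measurePreserving_eval i)

lemma int_comp_eval (i : Fin n) {F : ℝ → ℝ} (hF : AEStronglyMeasurable F lineMeasure) :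
    ∫ ξ, F (ξ i) ∂(cubeMeasure n) = ∫ x, F x ∂lineMeasure := by
  have hmap := (measurePreserving_eval (n := n) i).map_eq
  rw [← hmap, integral_map (measurable_pi_apply i).aemeasurable (hmap.symm ▸ hF)]

lemma int_marg (hg : MemLp g 2 (cubeMeasure n)) (i : Fin n) :
    ∫ x, marginal g i x ∂lineMeasure = ∫ ξ, g ξ ∂(cubeMeasure n) := by
  rw [fubini_upd i (hg.integrable one_le_two)]; rfl

lemma int_gh (hg : MemLp g 2 (cubeMeasure n)) (i : Fin n) :
    ∫ ξ, g ξ * marginal g i (ξ i) ∂(cubeMeasure n)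
      = ∫ x, marginal g i x ^ 2 ∂lineMeasure := by
  rw [fubini_upd i (L2mul hg (h_memL2 hg i))]
  simp only [Function.update_self]
  simp_rw [integral_mul_const]
  have hmm : ∀ x : ℝ, (∫ η, g (Function.update η i x) ∂(cubeMeasure n)) = marginal g i x :=
    fun _ => rfl
  simp_rw [hmm, ← pow_two]

lemma int_hh (hg : MemLp g 2 (cubeMeasure n)) (i j : Fin n) (hij : j ≠ i) :
    ∫ ξ, marginal g i (ξ i) * marginal g j (ξ j) ∂(cubeMeasure n)
      = (∫ x, marginal g i x ∂lineMeasure) * (∫ x, marginal g j x ∂lineMeasure) := by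
  rw [fubini_upd i (L2mul (h_memL2 hg i) (h_memL2 hg j))]
  simp only [Function.update_self, Function.update_of_ne hij]
  simp_rw [integral_const_mul]
  rw [int_comp_eval j (marg_aesm hg j), integral_mul_const]

end main


theorem stmt1 (n : ℕ) (hn : 2 ≤ n) (g : (Fin n → ℝ) → ℝ)
    (hg : MemLp g 2 (cubeMeasure n))
    (hint : ∫ ξ, g ξ ∂(cubeMeasure n) = 1) :
    ∫ ξ, (g ξ)^2 ∂(cubeMeasure n) ≥
      (∑ i : Fin n, ∫ x, (marginal g i x)^2 ∂lineMeasure) - ((n : ℝ) - 1) := by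
  classical
  set μ := cubeMeasure n with hμ
  have ig : Integrable g μ := hg.integrable one_le_two
  have ig2 : Integrable (fun ξ => g ξ ^ 2) μ := hg.integrable_sq
  set T : Fin n → ℝ := fun i => ∫ x, marginal g i x ^ 2 ∂lineMeasure with hT
  have hh2 : ∀ i, MemLp (fun ξ : Fin n → ℝ => marginal g i (ξ i)) 2 μ := h_memL2 hg
  set Sh : (Fin n → ℝ) → ℝ := fun ξ => ∑ i, marginal g i (ξ i) with hShdef
  have hShL2 : MemLp Sh 2 μ := by
    apply memLp_finsetSum Finset.univ fun i _ => hh2 i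
  have iSh : Integrable Sh μ := hShL2.integrable one_le_two
  have igSh : Integrable (fun ξ => g ξ * Sh ξ) μ := L2mul hg hShL2
  have iShSh : Integrable (fun ξ => Sh ξ * Sh ξ) μ := L2mul hShL2 hShL2
  have hM1 : ∀ i, ∫ x, marginal g i x ∂lineMeasure = 1 := fun i => by
    rw [int_marg hg i, hint]
  have hih : ∀ i, ∫ ξ, marginal g i (ξ i) ∂μ = 1 := fun i => by
    rw [hμ, int_comp_eval i (marg_aesm hg i), hM1 i]
  have hhh : ∀ i j, ∫ ξ, marginal g i (ξ i) * marginal g j (ξ j) ∂μ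
      = if i = j then T i else 1 := by
    intro i j
    by_cases h : i = j
    · subst h
      rw [if_pos rfl, hμ, int_comp_eval i (F := fun x => marginal g i x * marginal g i x)
        ((marg_aesm hg i).mul (marg_aesm hg i))]
      simp_rw [← pow_two]
      rfl
    · rw [if_neg h, hμ, int_hh hg i j (fun hji => h hji.symm), hM1 i, hM1 j, one_mul]
  have hgSh : ∫ ξ, g ξ * Sh ξ ∂μ = ∑ i, T i := by
    simp_rw [hShdef, Finset.mul_sum]
    rw [integral_finset_sum _ (fun i _ => L2mul hg (hh2 i))]
    exact Finset.sum_congr rfl fun i _ => int_gh hg i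
  have hShint : ∫ ξ, Sh ξ ∂μ = (n : ℝ) := by
    rw [hShdef, integral_finset_sum _ (fun i _ => (hh2 i).integrable one_le_two)]
    simp [hih]
  have hShSh : ∫ ξ, Sh ξ * Sh ξ ∂μ = (∑ i, T i) + ((n : ℝ) ^ 2 - n) := by
    have hexpand : ∀ ξ, Sh ξ * Sh ξ
        = ∑ i, ∑ j, marginal g i (ξ i) * marginal g j (ξ j) := by
      intro ξ; rw [hShdef]; exact Finset.sum_mul_sum _ _ _ _
    simp_rw [hexpand]
    rw [integral_finset_sum _
      (fun i _ => integrable_finset_sum _ (fun j _ => L2mul (hh2 i) (hh2 j)))]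
    have h2 : ∀ i : Fin n,
        ∫ ξ, ∑ j, marginal g i (ξ i) * marginal g j (ξ j) ∂μ = T i + ((n : ℝ) - 1) := by
      intro i
      rw [integral_finset_sum _ (fun j _ => L2mul (hh2 i) (hh2 j)),
        Finset.sum_congr rfl (fun j _ => hhh i j)]
      have hsplit : ∀ j : Fin n, (if i = j then T i else 1)
          = (if i = j then T i - 1 else 0) + 1 := by
        intro j; split <;> ring
      rw [Finset.sum_congr rfl fun j _ => hsplit j, Finset.sum_add_distrib,
        Finset.sum_ite_eq, if_pos (Finset.mem_univ i)]
      simp [Finset.card_univ]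
      ring
    rw [Finset.sum_congr rfl fun i _ => h2 i, Finset.sum_add_distrib]
    simp [Finset.card_univ, Finset.sum_const]
    ring
  set c : ℝ := (n : ℝ) - 1 with hc
  have hq : 0 ≤ ∫ ξ, (g ξ - Sh ξ + c) ^ 2 ∂μ := integral_nonneg fun ξ => sq_nonneg _
  have hexp : ∀ ξ, (g ξ - Sh ξ + c) ^ 2
      = g ξ ^ 2 + Sh ξ * Sh ξ - 2 * (g ξ * Sh ξ) + (2 * c) * g ξ - (2 * c) * Sh ξ + c ^ 2 :=
    fun ξ => by ring
  have i1 : Integrable (fun ξ => g ξ ^ 2 + Sh ξ * Sh ξ) μ := ig2.add iShSh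
  have i2 : Integrable (fun ξ => g ξ ^ 2 + Sh ξ * Sh ξ - 2 * (g ξ * Sh ξ)) μ :=
    i1.sub (igSh.const_mul 2)
  have i3 : Integrable
      (fun ξ => g ξ ^ 2 + Sh ξ * Sh ξ - 2 * (g ξ * Sh ξ) + (2 * c) * g ξ) μ :=
    i2.add (ig.const_mul (2 * c))
  have i4 : Integrable
      (fun ξ => g ξ ^ 2 + Sh ξ * Sh ξ - 2 * (g ξ * Sh ξ) + (2 * c) * g ξ - (2 * c) * Sh ξ) μ :=
    i3.sub (iSh.const_mul (2 * c))
  have hval : ∫ ξ, (g ξ - Sh ξ + c) ^ 2 ∂μ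
      = (∫ ξ, g ξ ^ 2 ∂μ) + (∫ ξ, Sh ξ * Sh ξ ∂μ) - 2 * (∫ ξ, g ξ * Sh ξ ∂μ)
        + (2 * c) * (∫ ξ, g ξ ∂μ) - (2 * c) * (∫ ξ, Sh ξ ∂μ) + c ^ 2 := by
    simp_rw [hexp]
    rw [integral_add i4 (integrable_const _), integral_sub i3 (iSh.const_mul (2 * c)),
      integral_add i2 (ig.const_mul (2 * c)), integral_sub i1 (igSh.const_mul 2),
      integral_add ig2 iShSh, integral_const_mul, integral_const_mul, integral_const_mul,
      integral_const]
    simp [measure_univ]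
  rw [hval, hgSh, hShint, hShSh, hint] at hq
  have hTsum : (∑ i : Fin n, ∫ x, (marginal g i x) ^ 2 ∂lineMeasure) = ∑ i, T i := rfl
  rw [ge_iff_le, hTsum]
  rw [hc] at hq
  nlinarith [hq]
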